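/- arXiv:1806.02526 — 2 statements merged into one kernel-verified Lean document; each statement's English description precedes it below -/
import Mathlib

section
/- Let K be a field, V and W vector spaces over K, M an additive commutative group, and ρ : M →+ ℤ an additive homomorphism. Let (V_k)_{k∈ι} be a family of K-subspaces of V together with weights u : ι → M, and (W_l)_{l∈κ} a family of K-subspaces of W together with weights v : κ → M. Define the filtrations V^ρ(p) = ⨆_{k : ρ(u k) ≥ p} V_k and W^ρ(q) = ⨆_{l : ρ(v l) ≥ q} W_l, and inside V ⊗_K W set (V⊗W)^ρ(j) = ⨆_{(k,l) : ρ(u k) + ρ(v l) ≥ j} T(V_k, W_l). Then for every j ∈ ℤ one has (V⊗W)^ρ(j) = ⨆_{p ∈ ℤ} T(V^ρ(p), W^ρ(j−p)). -/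
/-!
Write `a = ρ ∘ u` and `b = ρ ∘ v`. A summand `T(V_k, W_l)` with `j ≤ a k + b l` lies in
`T(V^ρ(a k), W^ρ(j - a k))`. Conversely, `T` commutes with suprema in each argument, so
`T(V^ρ(p), W^ρ(j - p))` is the supremum of the `T(V_k, W_l)` with `p ≤ a k` and `j - p ≤ b l`,
each of which has `j ≤ a k + b l`.
-/

open TensorProduct

/-- The image of `P ⊗ Q` in `V ⊗[K] W`: the span of elementary tensors `p ⊗ q`. -/
noncomputable def tensorSpan (K : Type*) [Field K] {V W : Type*} [AddCommGroup V] [Module K V]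
    [AddCommGroup W] [Module K W] (P : Submodule K V) (Q : Submodule K W) :
    Submodule K (V ⊗[K] W) :=
  Submodule.map₂ (TensorProduct.mk K V W) P Q

namespace Submodule

section Semiring

variable {R M : Type*} [Semiring R] [AddCommMonoid M] [Module R M] {ι Γ : Type*} [Preorder Γ]

def weightFiltration (V : ι → Submodule R M) (a : ι → Γ) (p : Γ) : Submodule R M :=
  ⨆ (k : ι) (_ : p ≤ a k), V k

theorem le_weightFiltration (V : ι → Submodule R M) (a : ι → Γ) {p : Γ} {k : ι} (h : p ≤ a k) :
    V k ≤ weightFiltration V a p :=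
  le_iSup₂_of_le k h le_rfl

end Semiring

variable {R M N P : Type*} [CommSemiring R] [AddCommMonoid M] [AddCommMonoid N] [AddCommMonoid P]
  [Module R M] [Module R N] [Module R P] {ι κ Γ : Type*}

theorem map₂_weightFiltration [Preorder Γ] (f : M →ₗ[R] N →ₗ[R] P) (V : ι → Submodule R M)
    (W : κ → Submodule R N) (a : ι → Γ) (b : κ → Γ) (p q : Γ) :
    map₂ f (weightFiltration V a p) (weightFiltration W b q) =
      ⨆ (k : ι) (_ : p ≤ a k) (l : κ) (_ : q ≤ b l), map₂ f (V k) (W l) := by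
  simp only [weightFiltration, map₂_iSup_left]
  simp only [map₂_iSup_right]

theorem iSup_map₂_eq_iSup_map₂_weightFiltration [AddCommGroup Γ] [PartialOrder Γ]
    [IsOrderedAddMonoid Γ] (f : M →ₗ[R] N →ₗ[R] P) (V : ι → Submodule R M)
    (W : κ → Submodule R N) (a : ι → Γ) (b : κ → Γ) (j : Γ) :
    ⨆ (kl : ι × κ) (_ : j ≤ a kl.1 + b kl.2), map₂ f (V kl.1) (W kl.2) =
      ⨆ p : Γ, map₂ f (weightFiltration V a p) (weightFiltration W b (j - p)) := by
  apply le_antisymm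
  · refine iSup₂_le fun ⟨k, l⟩ hkl => le_iSup_of_le (a k) (map₂_le_map₂ ?_ ?_)
    · exact le_weightFiltration V a le_rfl
    · exact le_weightFiltration W b (sub_le_iff_le_add'.mpr hkl)
  · refine iSup_le fun p => ?_
    rw [map₂_weightFiltration]
    exact iSup₂_le fun k hk => iSup₂_le fun l hl =>
      le_iSup₂_of_le (k, l) ((add_sub_cancel p j).ge.trans (add_le_add hk hl)) le_rfl

end Submodule

/-- The tensor-product filtration of the filtrations induced by weighted families of
subspaces is again induced by the tensor family with added weights. -/
theorem tensor_filtration_eq_sum_of_filtrations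
    (K : Type*) [Field K] (V W : Type*) [AddCommGroup V] [Module K V]
    [AddCommGroup W] [Module K W]
    (M : Type*) [AddCommGroup M] (ρ : M →+ ℤ)
    {ι κ : Type*} (Vfam : ι → Submodule K V) (u : ι → M)
    (Wfam : κ → Submodule K W) (v : κ → M) (j : ℤ) :
    (⨆ (kl : ι × κ) (_ : ρ (u kl.1) + ρ (v kl.2) ≥ j),
        tensorSpan K (Vfam kl.1) (Wfam kl.2)) =
      ⨆ p : ℤ,
        tensorSpan K (⨆ (k : ι) (_ : ρ (u k) ≥ p), Vfam k)
          (⨆ (l : κ) (_ : ρ (v l) ≥ j - p), Wfam l) :=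
  Submodule.iSup_map₂_eq_iSup_map₂_weightFiltration (TensorProduct.mk K V W) Vfam Wfam
    (ρ ∘ u) (ρ ∘ v) j
end

section
/- Let K be a field, V and W vector spaces over K, and M an additive commutative group. Suppose (V_c)_{c∈M} is an internal direct sum decomposition of V by K-subspaces and (W_c)_{c∈M} is an internal direct sum decomposition of W. For c ∈ M define the subspace (V⊗W)_c = ⨆_{c₁ + c₂ = c} T(V_{c₁}, W_{c₂}) of V ⊗_K W. Then the family ((V⊗W)_c)_{c∈M} is an internal direct sum decomposition of V ⊗_K W. -/
/-!
The blocks `T(V_a, W_b)`, indexed by `(a, b) ∈ M × M`, are independent: the tensor product of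
the projections onto `V_a` and onto `W_b` fixes `T(V_a, W_b)` and kills every other block.
Grouping an independent family of submodules along the fibres of `(a, b) ↦ a + b` keeps it
independent, and the blocks span `V ⊗ W` because `⊗` commutes with suprema in each variable.
-/

open TensorProduct

section Lattice

variable {α ι κ : Type*} [CompleteLattice α]

theorem iSupIndep.isCompl_biSup_ne {t : ι → α} (ht : iSupIndep t) (htop : ⨆ i, t i = ⊤)
    (i : ι) : IsCompl (t i) (⨆ (j) (_ : j ≠ i), t j) :=
  ⟨ht i, by rw [codisjoint_iff, ← iSup_split_single t i, htop]⟩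

theorem iSup_iSup_fiber (t : ι → α) (f : ι → κ) :
    ⨆ (c) (i) (_ : f i = c), t i = ⨆ i, t i := by
  rw [iSup_comm]
  simp only [iSup_iSup_eq_right]

theorem iSupIndep.iSup_fiber [IsModularLattice α] [IsCompactlyGenerated α] {t : ι → α}
    (ht : iSupIndep t) (f : ι → κ) : iSupIndep fun c => ⨆ (i) (_ : f i = c), t i := by
  intro c
  have hrest : ⨆ (c') (_ : c' ≠ c) (i) (_ : f i = c'), t i = ⨆ (i) (_ : f i ≠ c), t i := by
    refine le_antisymm (iSup₂_le fun c' hc' => iSup₂_le fun i hi => ?_)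
      (iSup₂_le fun i hi => le_iSup₂_of_le (f i) hi (le_iSup₂_of_le i rfl le_rfl))
    exact le_iSup₂_of_le (f := fun i (_ : f i ≠ c) => t i) i (hi ▸ hc') le_rfl
  rw [hrest]
  exact ht.disjoint_biSup_biSup (s := f ⁻¹' {c}) (t := {i | f i ≠ c})
    (Set.disjoint_left.2 fun _ h h' => h' h)

end Lattice

theorem Submodule.disjoint_of_le_eqLocus_id_of_le_ker {R N : Type*} [Ring R] [AddCommGroup N]
    [Module R N] {F : N →ₗ[R] N} {A B : Submodule R N} (hA : A ≤ LinearMap.eqLocus F .id)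
    (hB : B ≤ LinearMap.ker F) : Disjoint A B :=
  Submodule.disjoint_def.2 fun _ hxA hxB => (hA hxA).symm.trans (hB hxB)

section Tensor

variable {K V W ι κ : Type*} [Field K] [AddCommGroup V] [Module K V] [AddCommGroup W]
  [Module K W]

theorem tensorSpan_le_iff {P : Submodule K V} {Q : Submodule K W} {N : Submodule K (V ⊗[K] W)} :
    tensorSpan K P Q ≤ N ↔ ∀ v ∈ P, ∀ w ∈ Q, v ⊗ₜ[K] w ∈ N :=
  Submodule.map₂_le

theorem iSupIndep_tensorSpan {P : ι → Submodule K V} {Q : κ → Submodule K W}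
    (hP : iSupIndep P) (hPtop : ⨆ i, P i = ⊤) (hQ : iSupIndep Q) (hQtop : ⨆ j, Q j = ⊤) :
    iSupIndep fun x : ι × κ => tensorSpan K (P x.1) (Q x.2) := by
  rintro ⟨i, j⟩
  have hPi := hP.isCompl_biSup_ne hPtop i
  have hQj := hQ.isCompl_biSup_ne hQtop j
  refine Submodule.disjoint_of_le_eqLocus_id_of_le_ker
    (F := map ((P i).projection _ hPi) ((Q j).projection _ hQj)) ?_ ?_
  · refine tensorSpan_le_iff.2 fun v hv w hw => ?_
    simp [Submodule.projection_apply_of_mem_left _ hv, Submodule.projection_apply_of_mem_left _ hw]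
  · refine iSup₂_le fun ⟨i', j'⟩ hne => tensorSpan_le_iff.2 fun v hv w hw => ?_
    rw [LinearMap.mem_ker, map_tmul]
    rcases eq_or_ne i' i with rfl | hi
    · have hj : j' ≠ j := fun h => hne (by rw [h])
      rw [Submodule.projection_apply_of_mem_right _
        (le_iSup₂ (f := fun j (_ : j ≠ _) => Q j) j' hj hw), tmul_zero]
    · rw [Submodule.projection_apply_of_mem_right _
        (le_iSup₂ (f := fun i (_ : i ≠ _) => P i) i' hi hv), zero_tmul]

theorem iSup_tensorSpan_eq_top {P : ι → Submodule K V} {Q : κ → Submodule K W}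
    (hPtop : ⨆ i, P i = ⊤) (hQtop : ⨆ j, Q j = ⊤) :
    ⨆ x : ι × κ, tensorSpan K (P x.1) (Q x.2) = ⊤ := by
  simp_rw [iSup_prod, tensorSpan, ← Submodule.map₂_iSup_right, ← Submodule.map₂_iSup_left,
    hPtop, hQtop]
  exact map₂_mk_top_top_eq_top K V W

end Tensor

/-- If `V = ⨁_{c ∈ M} V_c` and `W = ⨁_{c ∈ M} W_c` are internal direct-sum decompositions
by subspaces indexed by an additive commutative group `M`, then setting
`(V ⊗ W)_c = ⨆_{c₁ + c₂ = c} T(V_{c₁}, W_{c₂})` gives an internal direct-sum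
decomposition of `V ⊗[K] W`. -/
theorem tensor_decomposition_of_decompositions
    (K : Type*) [Field K] (V W : Type*) [AddCommGroup V] [Module K V]
    [AddCommGroup W] [Module K W]
    (M : Type*) [AddCommGroup M]
    (Vfam : M → Submodule K V) (Wfam : M → Submodule K W)
    (hVindep : iSupIndep Vfam) (hVtop : (⨆ c, Vfam c) = ⊤)
    (hWindep : iSupIndep Wfam) (hWtop : (⨆ c, Wfam c) = ⊤) :
    iSupIndep (fun c : M =>
        ⨆ (p : M × M) (_ : p.1 + p.2 = c), tensorSpan K (Vfam p.1) (Wfam p.2)) ∧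
      (⨆ c : M, ⨆ (p : M × M) (_ : p.1 + p.2 = c),
          tensorSpan K (Vfam p.1) (Wfam p.2)) = ⊤ :=
  ⟨(iSupIndep_tensorSpan hVindep hVtop hWindep hWtop).iSup_fiber _, by
    rw [iSup_iSup_fiber]
    exact iSup_tensorSpan_eq_top hVtop hWtop⟩
end
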